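/- Let a ∈ ℝ with a ≠ 0 and a ≠ 1, and set A = {0, 1, a}. Then A is spectral if and only if a is rational and, writing a = p/q in reduced form (p ∈ ℤ, q ∈ ℕ, q ≥ 1, gcd(|p|, q) = 1), one has p + q ≡ 0 (mod 3). -/

import Mathlib

/-!
Evaluation at the points of `A` identifies `L²(μ_A)` with `ℂ^A`, so `A` is spectral exactly when
there are `|A|` frequencies whose exponentials are pairwise orthogonal, i.e.
`∑_{x ∈ A} e((λ' - λ) x) = 0` for `λ ≠ λ'`. For `A = {0, 1, a}` this sum is
`1 + e(θ) + e(θ a)` with `θ = λ' - λ`. Three unit vectors add up to zero only when they form an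
equilateral triangle, so the sum vanishes iff `e(θ)` is a primitive cube root of unity and
`e(θ a)` is its inverse: `3θ ∈ ℤ \ 3ℤ` and `θ + θ a ∈ ℤ`. A single such pair writes `a = m / n`
with `3 ∤ n` and `3 ∣ m + n`; conversely for such `a` the frequencies `{0, n/3, 2n/3}` work.
Since `3 ∤ n`, the condition `3 ∣ m + n` survives the reduction of `m / n` to lowest terms.
-/

open MeasureTheory Real

/-- The uniform atomic probability measure `μ_A = (1/|A|) ∑_{a ∈ A} δ_a` on a finite set
`A ⊂ ℝ`. -/
noncomputable def unifMeasure (A : Finset ℝ) : Measure ℝ :=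
  (A.card : ENNReal)⁻¹ • ∑ a ∈ A, Measure.dirac a

/-- A finite set `A ⊂ ℝ` is spectral if there is a set `Λ ⊆ ℝ` such that the exponentials
`{e_λ : λ ∈ Λ}`, `e_λ(x) = e^{2πiλx}`, form an orthonormal basis of `L²(μ_A)`. -/
def IsSpectralFinset (A : Finset ℝ) : Prop :=
  ∃ Λ : Set ℝ, ∃ b : HilbertBasis Λ ℂ (Lp ℂ 2 (unifMeasure A)),
    ∀ l : Λ, (b l : ℝ → ℂ) =ᵐ[unifMeasure A]
      fun x => Complex.exp (2 * π * Complex.I * (l : ℝ) * x)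

open ComplexConjugate

noncomputable def fourierExp (x : ℝ) : ℂ := Complex.exp (2 * π * Complex.I * x)

theorem fourierExp_add (x y : ℝ) : fourierExp (x + y) = fourierExp x * fourierExp y := by
  simp only [fourierExp, ← Complex.exp_add]
  push_cast
  ring_nf

theorem fourierExp_nat_mul (n : ℕ) (x : ℝ) : fourierExp (n * x) = fourierExp x ^ n := by
  simp only [fourierExp, ← Complex.exp_nat_mul]
  push_cast
  ring_nf

theorem fourierExp_zero : fourierExp 0 = 1 := by simp [fourierExp]

theorem fourierExp_eq_one_iff {x : ℝ} : fourierExp x = 1 ↔ ∃ n : ℤ, x = n := by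
  rw [fourierExp, Complex.exp_eq_one_iff]
  refine exists_congr fun n => ?_
  rw [mul_comm (n : ℂ), mul_right_inj' Complex.two_pi_I_ne_zero, ← Complex.ofReal_intCast,
    Complex.ofReal_inj]

theorem fourierExp_intCast (n : ℤ) : fourierExp n = 1 := fourierExp_eq_one_iff.2 ⟨n, rfl⟩

theorem norm_fourierExp (x : ℝ) : ‖fourierExp x‖ = 1 := by
  simp [fourierExp, Complex.norm_exp]

theorem conj_fourierExp (x : ℝ) : conj (fourierExp x) = fourierExp (-x) := by
  simp [fourierExp, ← Complex.exp_conj, map_ofNat]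

theorem fourierExp_mul_eq_exp (l x : ℝ) :
    fourierExp (l * x) = Complex.exp (2 * π * Complex.I * l * x) := by
  simp [fourierExp, mul_assoc]

theorem Complex.sq_add_add_one_eq_zero_of_norm_eq_one {z w : ℂ} (hz : ‖z‖ = 1) (hw : ‖w‖ = 1)
    (h : 1 + z + w = 0) : z ^ 2 + z + 1 = 0 := by
  have hzz : z * conj z = 1 := by
    rw [Complex.mul_conj, Complex.normSq_eq_norm_sq, hz]; simp
  have hre : 2 * z.re + 1 = 0 := by
    rw [show w = -(1 + z) by linear_combination h, norm_neg] at hw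
    have h1 := congrArg (· ^ 2) hw
    have h2 := congrArg (· ^ 2) hz
    simp only [Complex.sq_norm, Complex.normSq_apply, Complex.add_re, Complex.add_im,
      Complex.one_re, Complex.one_im] at h1 h2
    linarith
  have hsum : z + conj z = -1 := by
    rw [Complex.add_conj]
    exact_mod_cast (by linarith : 2 * z.re = -1)
  linear_combination z * hsum - hzz

theorem one_add_fourierExp_add_fourierExp_eq_zero_iff {x y : ℝ} :
    1 + fourierExp x + fourierExp y = 0 ↔
      (∃ n : ℤ, 3 * x = n ∧ ¬ 3 ∣ n) ∧ ∃ k : ℤ, x + y = k := by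
  have hcube : fourierExp (3 * x) = fourierExp x ^ 3 := by exact_mod_cast fourierExp_nat_mul 3 x
  have hsum : fourierExp (x + y) = fourierExp x * fourierExp y := fourierExp_add x y
  constructor
  · intro h
    have hquad := Complex.sq_add_add_one_eq_zero_of_norm_eq_one
      (norm_fourierExp x) (norm_fourierExp y) h
    obtain ⟨n, hn⟩ := (fourierExp_eq_one_iff (x := 3 * x)).1 <| by
      rw [hcube]; linear_combination (fourierExp x - 1) * hquad
    refine ⟨⟨n, hn, ?_⟩, fourierExp_eq_one_iff.1 ?_⟩
    · rintro ⟨j, rfl⟩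
      have hx : x = j := by push_cast at hn; linarith
      rw [hx, fourierExp_intCast] at hquad
      norm_num at hquad
    · rw [hsum]
      linear_combination fourierExp x * h - hquad
  · rintro ⟨⟨n, hn, h3n⟩, k, hk⟩
    have h1 : fourierExp x ≠ 1 := by
      intro h1
      obtain ⟨j, hj⟩ := fourierExp_eq_one_iff.1 h1
      exact h3n ⟨j, by exact_mod_cast hj ▸ hn.symm⟩
    have h3 : fourierExp x ^ 3 = 1 := by rw [← hcube, hn, fourierExp_intCast]
    have hquad : fourierExp x ^ 2 + fourierExp x + 1 = 0 := by
      refine (mul_eq_zero.1 ?_).resolve_left (sub_ne_zero.2 h1)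
      linear_combination h3
    have h0 : fourierExp x ≠ 0 := by rintro h0; simp [h0] at hquad
    refine mul_left_cancel₀ h0 ?_
    have hxy : fourierExp x * fourierExp y = 1 := by rw [← hsum, hk, fourierExp_intCast]
    linear_combination hxy + hquad

section UnifMeasure

variable {A : Finset ℝ}

theorem ae_unifMeasure_iff {p : ℝ → Prop} : (∀ᵐ x ∂unifMeasure A, p x) ↔ ∀ x ∈ A, p x := by
  rw [unifMeasure, Measure.ae_ennreal_smul_measure_iff (by simp), ae_finsetSum_measure_iff]
  simp [ae_dirac_eq]

instance : IsFiniteMeasure (unifMeasure A) := by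
  constructor
  rcases A.eq_empty_or_nonempty with rfl | hA
  · simp [unifMeasure]
  · simp [unifMeasure, ENNReal.inv_mul_cancel, hA.ne_empty]

theorem memLp_unifMeasure {E : Type*} [NormedAddCommGroup E] (f : ℝ → E) (p : ENNReal) :
    MemLp f p (unifMeasure A) := by
  refine MemLp.of_bound ?_ (∑ x ∈ A, ‖f x‖) (ae_unifMeasure_iff.2 fun x hx => ?_)
  · rw [unifMeasure, ← Measure.sum_coe_finset]
    exact (AEStronglyMeasurable.sum_measure fun _ => aestronglyMeasurable_dirac).smul_measure _
  · exact Finset.single_le_sum (f := fun x => ‖f x‖) (fun _ _ => norm_nonneg _) hx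

theorem integral_unifMeasure {E : Type*} [NormedAddCommGroup E] [NormedSpace ℝ E] [CompleteSpace E]
    (f : ℝ → E) :
    ∫ x, f x ∂unifMeasure A = (A.card : ℝ)⁻¹ • ∑ x ∈ A, f x := by
  rw [unifMeasure, integral_smul_measure,
    integral_finsetSum_measure fun x _ => integrable_dirac enorm_lt_top]
  simp [integral_dirac]

end UnifMeasure

section L2

variable {A : Finset ℝ}

theorem Lp.unifMeasure_ext_iff {E : Type*} [NormedAddCommGroup E] {p : ENNReal}
    {F G : Lp E p (unifMeasure A)} : F = G ↔ ∀ x ∈ A, F x = G x :=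
  ⟨fun h _ _ => h ▸ rfl, fun h => Lp.ext (ae_unifMeasure_iff.2 h)⟩

theorem Lp.inner_unifMeasure (F G : Lp ℂ 2 (unifMeasure A)) :
    inner ℂ F G = (A.card : ℂ)⁻¹ * ∑ x ∈ A, conj (F x) * G x := by
  simp only [L2.inner_def, RCLike.inner_apply', integral_unifMeasure, Complex.real_smul]
  push_cast
  rfl

variable (A)

noncomputable def Lp.unifMeasureEquiv (𝕜 : Type*) [RCLike 𝕜] (p : ENNReal) [Fact (1 ≤ p)] :
    Lp 𝕜 p (unifMeasure A) ≃ₗ[𝕜] (A → 𝕜) := by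
  classical
  let eval : Lp 𝕜 p (unifMeasure A) →ₗ[𝕜] (A → 𝕜) :=
    { toFun := fun F x => F x
      map_add' := fun F G => funext fun x => ae_unifMeasure_iff.1 (Lp.coeFn_add F G) x x.2
      map_smul' := fun c F => funext fun x => ae_unifMeasure_iff.1 (Lp.coeFn_smul c F) x x.2 }
  refine LinearEquiv.ofBijective eval
    ⟨fun F G h => Lp.unifMeasure_ext_iff.2 fun x hx => congrFun h ⟨x, hx⟩, fun f => ?_⟩
  let g : ℝ → 𝕜 := fun x => if h : x ∈ A then f ⟨x, h⟩ else 0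
  refine ⟨(memLp_unifMeasure g p).toLp g, funext fun x => ?_⟩
  simpa [eval, g] using ae_unifMeasure_iff.1 (memLp_unifMeasure g p).coeFn_toLp x x.2

theorem Lp.finrank_unifMeasure (𝕜 : Type*) [RCLike 𝕜] (p : ENNReal) [Fact (1 ≤ p)] :
    Module.finrank 𝕜 (Lp 𝕜 p (unifMeasure A)) = A.card := by
  rw [(Lp.unifMeasureEquiv A 𝕜 p).finrank_eq, Module.finrank_fintype_fun_eq_card,
    Fintype.card_coe]

noncomputable def expLp (l : ℝ) : Lp ℂ 2 (unifMeasure A) :=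
  (memLp_unifMeasure (fun x => fourierExp (l * x)) 2).toLp _

variable {A}

theorem inner_expLp (l l' : ℝ) :
    inner ℂ (expLp A l) (expLp A l') =
      (A.card : ℂ)⁻¹ * ∑ x ∈ A, fourierExp ((l' - l) * x) := by
  rw [Lp.inner_unifMeasure]
  congr 1
  refine Finset.sum_congr rfl fun x hx => ?_
  have hval : ∀ l, expLp A l x = fourierExp (l * x) := fun l =>
    ae_unifMeasure_iff.1 (memLp_unifMeasure _ 2).coeFn_toLp x hx
  rw [hval, hval, conj_fourierExp, ← fourierExp_add]
  ring_nf

end L2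

theorem HilbertBasis.natCard_eq_finrank {ι 𝕜 E : Type*} [RCLike 𝕜] [NormedAddCommGroup E]
    [InnerProductSpace 𝕜 E] [FiniteDimensional 𝕜 E] (b : HilbertBasis ι 𝕜 E) :
    Nat.card ι = Module.finrank 𝕜 E := by
  have : Finite ι := b.orthonormal.linearIndependent.finite
  have := Fintype.ofFinite ι
  exact (Module.finrank_eq_nat_card_basis b.toOrthonormalBasis.toBasis).symm

instance {A : Finset ℝ} {𝕜 : Type*} [RCLike 𝕜] {p : ENNReal} [Fact (1 ≤ p)] :
    FiniteDimensional 𝕜 (Lp 𝕜 p (unifMeasure A)) :=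
  (Lp.unifMeasureEquiv A 𝕜 p).symm.finiteDimensional

theorem isSpectralFinset_iff {A : Finset ℝ} (hA : A.Nonempty) :
    IsSpectralFinset A ↔ ∃ Λ : Finset ℝ, Λ.card = A.card ∧
      ∀ l ∈ Λ, ∀ l' ∈ Λ, l ≠ l' → ∑ x ∈ A, fourierExp ((l' - l) * x) = 0 := by
  have hexp (l : ℝ) : (expLp A l : ℝ → ℂ) =ᵐ[unifMeasure A]
      fun x => Complex.exp (2 * π * Complex.I * l * x) :=
    (memLp_unifMeasure _ 2).coeFn_toLp.trans (.of_forall fun x => fourierExp_mul_eq_exp l x)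
  have hcard : (A.card : ℂ) ≠ 0 := by exact_mod_cast hA.card_pos.ne'
  constructor
  · rintro ⟨Λ, b, hb⟩
    have hbexp (l : Λ) : b l = expLp A l := Lp.ext ((hb l).trans (hexp l).symm)
    have hfin : Λ.Finite := Set.finite_coe_iff.1 b.orthonormal.linearIndependent.finite
    refine ⟨hfin.toFinset, ?_, fun l hl l' hl' hne => ?_⟩
    · rw [← Lp.finrank_unifMeasure A ℂ 2, ← b.natCard_eq_finrank,
        Nat.card_eq_card_finite_toFinset hfin]
    · have horth : inner ℂ (b ⟨l, hfin.mem_toFinset.1 hl⟩) (b ⟨l', hfin.mem_toFinset.1 hl'⟩) = 0 :=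
        b.orthonormal.2 (by simpa using hne)
      rw [hbexp, hbexp, inner_expLp] at horth
      exact (mul_eq_zero.1 horth).resolve_left (inv_ne_zero hcard)
  · rintro ⟨Λ, hΛ, horth⟩
    have hon : Orthonormal ℂ fun l : (Λ : Set ℝ) => expLp A l := by
      rw [orthonormal_iff_ite]
      rintro ⟨l, hl⟩ ⟨l', hl'⟩
      rw [inner_expLp]
      split_ifs with h
      · cases h
        simp [fourierExp_zero, hcard]
      · rw [horth l hl l' hl' (by simpa using h), mul_zero]
    have hspan := hon.linearIndependent.span_eq_top_of_card_eq_finrank'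
      (by simp [hΛ, Lp.finrank_unifMeasure])
    refine ⟨Λ, HilbertBasis.mk hon (hspan ▸ Submodule.le_topologicalClosure _), fun l => ?_⟩
    rw [HilbertBasis.coe_mk]
    exact hexp l

theorem isSpectralFinset_zero_one_iff {a : ℝ} (ha0 : a ≠ 0) (ha1 : a ≠ 1) :
    IsSpectralFinset {0, 1, a} ↔ ∃ m n : ℤ, ¬ 3 ∣ n ∧ 3 ∣ m + n ∧ a = m / n := by
  have h0 : (0 : ℝ) ∉ ({1, a} : Finset ℝ) := by simp [ha0.symm]
  have hcard : ({0, 1, a} : Finset ℝ).card = 3 := by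
    rw [Finset.card_insert_of_notMem h0, Finset.card_pair ha1.symm]
  have hsum (θ : ℝ) : ∑ x ∈ {0, 1, a}, fourierExp (θ * x) =
      1 + fourierExp θ + fourierExp (θ * a) := by
    rw [Finset.sum_insert h0, Finset.sum_pair ha1.symm, mul_zero, mul_one, fourierExp_zero,
      add_assoc]
  rw [isSpectralFinset_iff (by simp), hcard]
  simp only [hsum, one_add_fourierExp_add_fourierExp_eq_zero_iff]
  constructor
  · rintro ⟨Λ, hΛ, horth⟩
    obtain ⟨l, hl, l', hl', hne⟩ := Finset.one_lt_card.1 (by omega : 1 < Λ.card)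
    obtain ⟨⟨n, hn, h3n⟩, k, hk⟩ := horth l hl l' hl' hne
    have hn0 : (n : ℝ) ≠ 0 := by
      exact_mod_cast fun h : n = 0 => h3n (h ▸ dvd_zero 3)
    refine ⟨3 * k - n, n, h3n, ⟨k, by ring⟩, ?_⟩
    rw [eq_div_iff hn0]
    push_cast
    linear_combination -(1 + a) * hn + 3 * hk
  · rintro ⟨m, n, h3n, ⟨c, hc⟩, rfl⟩
    have hn0 : (n : ℝ) ≠ 0 := by
      exact_mod_cast fun h : n = 0 => h3n (h ▸ dvd_zero 3)
    refine ⟨(Finset.range 3).image fun j : ℕ => (j : ℝ) * n / 3, ?_, ?_⟩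
    · rw [Finset.card_image_of_injective _ fun i j hij => by
        simpa [hn0] using hij, Finset.card_range]
    · simp only [Finset.mem_image, Finset.mem_range]
      rintro _ ⟨i, hi, rfl⟩ _ ⟨j, hj, rfl⟩ hij
      have hd : ¬ 3 ∣ ((j : ℤ) - i) := by
        rintro ⟨e, he⟩
        exact hij (by congr; omega)
      refine ⟨⟨(j - i) * n, by push_cast; ring, ?_⟩, (j - i) * c, ?_⟩
      · exact fun h => (Int.prime_three.dvd_or_dvd h).elim hd h3n
      · have hcR : (m : ℝ) + n = 3 * c := by exact_mod_cast hc
        field_simp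
        push_cast
        linear_combination ((j : ℝ) - i) * hcR

theorem exists_coprime_div_iff {ℓ : ℤ} (hℓ : Prime ℓ) {a : ℝ} :
    (∃ (p : ℤ) (q : ℕ), 1 ≤ q ∧ Nat.Coprime p.natAbs q ∧ a = p / q ∧ ℓ ∣ p + q) ↔
      ∃ m n : ℤ, ¬ ℓ ∣ n ∧ ℓ ∣ m + n ∧ a = m / n := by
  constructor
  · rintro ⟨p, q, -, hpq, ha, hℓpq⟩
    refine ⟨p, q, fun hℓq => hℓ.not_isUnit ?_, hℓpq, ha⟩
    have hcop : IsCoprime p q := Int.isCoprime_iff_gcd_eq_one.2 hpq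
    exact hcop.isUnit_of_dvd' (by simpa using dvd_sub hℓpq hℓq) hℓq
  · rintro ⟨m, n, hℓn, hℓmn, ha⟩
    set x : ℚ := m / n
    have hcross : x.num * n = m * x.den := by
      have hx : (x.num : ℚ) / x.den * n = m := by
        rw [Rat.num_div_den]
        exact div_mul_cancel₀ _ (by exact_mod_cast fun h : n = 0 => hℓn (h ▸ dvd_zero ℓ))
      field_simp at hx
      rw [mul_comm (m : ℤ)]
      exact_mod_cast hx
    refine ⟨x.num, x.den, x.pos, x.reduced, ?_, ?_⟩
    · rw [ha, ← Rat.cast_def, Rat.cast_div, Rat.cast_intCast, Rat.cast_intCast]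
    · have hdvd : ℓ ∣ (x.num + x.den) * n := by
        rw [show (x.num + x.den) * n = x.den * (m + n) by linear_combination hcross]
        exact dvd_mul_of_dvd_right hℓmn _
      exact (hℓ.dvd_or_dvd hdvd).resolve_right hℓn

/-- Let `a ∈ ℝ` with `a ≠ 0` and `a ≠ 1`.  The three-element set `A = {0, 1, a}` is spectral
if and only if `a` is rational and, writing `a = p/q` in reduced form, `3 ∣ p + q`. -/
theorem isSpectral_zero_one_iff (a : ℝ) (ha0 : a ≠ 0) (ha1 : a ≠ 1) :
    IsSpectralFinset ({0, 1, a} : Finset ℝ) ↔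
      ∃ (p : ℤ) (q : ℕ), 1 ≤ q ∧ Nat.Coprime p.natAbs q ∧ a = (p : ℝ) / (q : ℝ) ∧
        (3 : ℤ) ∣ p + (q : ℤ) := by
  rw [isSpectralFinset_zero_one_iff ha0 ha1, exists_coprime_div_iff Int.prime_three]
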